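/- Let H be an n-vertex 3-partite 3-graph with tripartition V₁ ∪ V₂ ∪ V₃. Then there exist a subhypergraph H' ⊆ H and a real-valued vector Δ indexed by the subsets of {1,2,3} such that |H'| ≥ |H|·(log n)^{−8}, and such that for every I ⊆ {1,2,3}, every |I|-element subset S of ⋃_{i∈I} V_i that is contained in an edge of H' satisfies Δ_I·(12 log n)^{−8} ≤ deg_{H'}(S) ≤ Δ_I. -/

import Mathlib

open Finset Real

open scoped Classical in
/-- `colDeg H σ` : the number of members of `H` containing `σ`.  For a 3-graph `H` and a
vertex set `S` this is the degree `deg_H(S)`. -/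
noncomputable def colDeg {X : Type*} (H : Finset (Finset X)) (σ : Finset X) : ℕ :=
  (H.filter fun h => σ ⊆ h).card

section Aux


lemma colDeg_mono {X : Type*} {G G' : Finset (Finset X)} (hsub : G ⊆ G') (σ : Finset X) :
    colDeg G σ ≤ colDeg G' σ := by
  classical
  exact Finset.card_le_card (Finset.filter_subset_filter _ hsub)

lemma one_le_colDeg {X : Type*} {G : Finset (Finset X)} {σ h : Finset X}
    (hh : h ∈ G) (hσ : σ ⊆ h) : 1 ≤ colDeg G σ := by
  classical
  have : h ∈ G.filter fun h => σ ⊆ h := Finset.mem_filter.mpr ⟨hh, hσ⟩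
  exact Finset.card_pos.mpr ⟨h, this⟩ 

lemma colDeg_le_card {X : Type*} {G : Finset (Finset X)} {σ : Finset X} :
    colDeg G σ ≤ G.card := by
  classical
  exact Finset.card_le_card (Finset.filter_subset _ _)

/-- The cleaning lemma: repeatedly delete edges through low-degree keys. -/
lemma clean_exists {X ι : Type*} [DecidableEq X] (T : Finset ι) (key : ι → Finset X → Finset X)
    (hkey : ∀ i h, key i h ⊆ h) (t : ι → ℝ) (ht : ∀ i, 0 ≤ t i) :
    ∀ (N : ℕ) (G : Finset (Finset X)), G.card ≤ N → ∃ G', G' ⊆ G ∧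
      ((G.card : ℝ) - G'.card) ≤ ∑ i ∈ T, t i * ((G.image (key i)).card : ℝ) ∧
      ∀ i ∈ T, ∀ S ∈ G'.image (key i), t i ≤ (colDeg G' S : ℝ) := by
  classical
  intro N
  induction N with
  | zero =>
    intro G hG
    have : G = ∅ := Finset.card_eq_zero.mp (Nat.le_zero.mp hG)
    subst this
    refine ⟨∅, Finset.Subset.rfl, by simp, by simp⟩
  | succ N ih =>
    intro G hG
    by_cases hbad : ∃ i ∈ T, ∃ S ∈ G.image (key i), (colDeg G S : ℝ) < t i
    · obtain ⟨i₀, hi₀, S, hS, hdeg⟩ := hbad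
      set G₂ := G.filter (fun h => ¬ S ⊆ h) with hG₂def
      have hsub : G₂ ⊆ G := Finset.filter_subset _ _
      obtain ⟨h₀, hh₀, hkey₀⟩ := Finset.mem_image.mp hS
      have hSh₀ : S ⊆ h₀ := hkey₀ ▸ hkey i₀ h₀
      have hh₀G₂ : h₀ ∉ G₂ := fun hmem => (Finset.mem_filter.mp hmem).2 hSh₀
      have hlt : G₂.card < G.card := Finset.card_lt_card ⟨hsub, fun hsup => hh₀G₂ (hsup hh₀)⟩
      obtain ⟨G', hG'sub, hcount, hreg⟩ := ih G₂ (by omega)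
      refine ⟨G', hG'sub.trans hsub, ?_, hreg⟩
      -- counting
      have hcard_split : (G.card : ℝ) - G₂.card = colDeg G S := by
        have hsp := Finset.card_filter_add_card_filter_not (s := G)
          (p := fun h => S ⊆ h)
        have hcd : colDeg G S = (G.filter fun h => S ⊆ h).card := by
          unfold colDeg
          congr 1
          exact Finset.filter_congr_decidable _ _ _
        rw [hcd, hG₂def]
        push_cast [← hsp]
        ring
      have himono : ∀ i ∈ T, ((G₂.image (key i)).card : ℝ) ≤ ((G.image (key i)).card : ℝ) := by
        intro i _
        exact_mod_cast Finset.card_le_card (Finset.image_subset_image hsub)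
      have hi₀drop : ((G₂.image (key i₀)).card : ℝ) ≤ ((G.image (key i₀)).card : ℝ) - 1 := by
        have hsubset : G₂.image (key i₀) ⊆ (G.image (key i₀)).erase S := by
          intro S' hS'
          obtain ⟨h, hh, rfl⟩ := Finset.mem_image.mp hS'
          refine Finset.mem_erase.mpr ⟨?_, Finset.mem_image_of_mem _ (hsub hh)⟩
          intro hEq
          exact (Finset.mem_filter.mp hh).2 (hEq ▸ hkey i₀ h)
        have h1 : (G₂.image (key i₀)).card ≤ (G.image (key i₀)).card - 1 := by
          have := Finset.card_le_card hsubset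
          rwa [Finset.card_erase_of_mem hS] at this
        have hpos : 1 ≤ (G.image (key i₀)).card := Finset.card_pos.mpr ⟨S, hS⟩
        have := (Nat.cast_le (α := ℝ)).mpr h1
        rw [Nat.cast_sub hpos] at this
        exact_mod_cast this
      have hsumle : ∑ i ∈ T, t i * ((G₂.image (key i)).card : ℝ)
          ≤ (∑ i ∈ T, t i * ((G.image (key i)).card : ℝ)) - t i₀ := by
        rw [← Finset.add_sum_erase T _ hi₀, ← Finset.add_sum_erase T
          (fun i => t i * ((G.image (key i)).card : ℝ)) hi₀]
        have h1 : t i₀ * ((G₂.image (key i₀)).card : ℝ)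
            ≤ t i₀ * (((G.image (key i₀)).card : ℝ) - 1) :=
          mul_le_mul_of_nonneg_left hi₀drop (ht i₀)
        have h2 : ∑ i ∈ T.erase i₀, t i * ((G₂.image (key i)).card : ℝ)
            ≤ ∑ i ∈ T.erase i₀, t i * ((G.image (key i)).card : ℝ) := by
          apply Finset.sum_le_sum
          intro i hi
          exact mul_le_mul_of_nonneg_left (himono i (Finset.mem_of_mem_erase hi)) (ht i)
        nlinarith [ht i₀]
      have : (G.card : ℝ) - G'.card = ((G.card : ℝ) - G₂.card) + ((G₂.card : ℝ) - G'.card) := by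
        ring
      rw [this, hcard_split]
      nlinarith [hcount, hsumle, hdeg]
    · push_neg at hbad
      refine ⟨G, Finset.Subset.rfl, ?_, hbad⟩
      simp only [sub_self]
      exact Finset.sum_nonneg fun i _ => mul_nonneg (ht i) (Nat.cast_nonneg _)

section Counting
variable {n : ℕ} {V : Fin 3 → Finset (Fin n)} {H : Finset (Finset (Fin n))}

/-- card of a key -/
lemma key_card (hdisj : ∀ i j : Fin 3, i ≠ j → Disjoint (V i) (V j))
    {h : Finset (Fin n)} (hh : ∀ i : Fin 3, (h ∩ V i).card = 1) (I : Finset (Fin 3)) :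
    (h ∩ I.biUnion V).card = I.card := by
  have heq : h ∩ I.biUnion V = I.biUnion fun i => h ∩ V i := by
    ext x
    simp only [Finset.mem_inter, Finset.mem_biUnion]
    tauto
  rw [heq, Finset.card_biUnion]
  · simp [hh]
  · intro i _ j _ hij
    exact Finset.disjoint_of_subset_left Finset.inter_subset_right
      (Finset.disjoint_of_subset_right Finset.inter_subset_right (hdisj i j hij))

lemma eq_key (hdisj : ∀ i j : Fin 3, i ≠ j → Disjoint (V i) (V j))
    {h S : Finset (Fin n)} (hh : ∀ i : Fin 3, (h ∩ V i).card = 1) {I : Finset (Fin 3)}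
    (hcard : S.card = I.card) (hsubU : S ⊆ I.biUnion V) (hSh : S ⊆ h) :
    S = h ∩ I.biUnion V :=
  Finset.eq_of_subset_of_card_le (Finset.subset_inter hSh hsubU)
    (by rw [key_card hdisj hh I, ← hcard])

lemma fiber_eq_colDeg (hdisj : ∀ i j : Fin 3, i ≠ j → Disjoint (V i) (V j))
    (hpart : ∀ h ∈ H, ∀ i : Fin 3, (h ∩ V i).card = 1)
    {G : Finset (Finset (Fin n))} (hGH : G ⊆ H) (I : Finset (Fin 3))
    {S : Finset (Fin n)} (hS : S ∈ G.image fun h => h ∩ I.biUnion V) :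
    (G.filter fun h => h ∩ I.biUnion V = S).card = colDeg G S := by
  obtain ⟨h₀, hh₀, hkey₀⟩ := Finset.mem_image.mp hS
  unfold colDeg
  congr 1
  apply Finset.ext
  intro h
  simp only [Finset.mem_filter, and_congr_right_iff]
  intro hhG
  constructor
  · rintro rfl; exact Finset.inter_subset_left
  · intro hSh
    have hcard : S.card = I.card := by rw [← hkey₀]; exact key_card hdisj (hpart h₀ (hGH hh₀)) I
    have hsubU : S ⊆ I.biUnion V := by rw [← hkey₀]; exact Finset.inter_subset_right
    exact (eq_key hdisj (hpart h (hGH hhG)) hcard hsubU hSh).symm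

lemma sum_colDeg (hdisj : ∀ i j : Fin 3, i ≠ j → Disjoint (V i) (V j))
    (hpart : ∀ h ∈ H, ∀ i : Fin 3, (h ∩ V i).card = 1)
    {G : Finset (Finset (Fin n))} (hGH : G ⊆ H) (I : Finset (Fin 3)) :
    ∑ S ∈ G.image (fun h => h ∩ I.biUnion V), colDeg G S = G.card := by
  rw [Finset.card_eq_sum_card_image (fun h => h ∩ I.biUnion V) G]
  exact Finset.sum_congr rfl fun S hS => (fiber_eq_colDeg hdisj hpart hGH I hS).symm

lemma card_big_keys (hdisj : ∀ i j : Fin 3, i ≠ j → Disjoint (V i) (V j))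
    (hpart : ∀ h ∈ H, ∀ i : Fin 3, (h ∩ V i).card = 1)
    (I : Finset (Fin 3)) {D : ℝ} (hD : 0 < D) :
    D * ((((H.image fun h => h ∩ I.biUnion V).filter
      fun S => D ≤ (colDeg H S : ℝ)).card : ℝ)) ≤ (H.card : ℝ) := by
  set A := (H.image fun h => h ∩ I.biUnion V).filter fun S => D ≤ (colDeg H S : ℝ) with hA
  calc D * (A.card : ℝ) = ∑ _S ∈ A, D := by rw [Finset.sum_const, nsmul_eq_mul, mul_comm]
    _ ≤ ∑ S ∈ A, (colDeg H S : ℝ) :=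
        Finset.sum_le_sum fun S hS => (Finset.mem_filter.mp hS).2
    _ ≤ ∑ S ∈ H.image (fun h => h ∩ I.biUnion V), (colDeg H S : ℝ) :=
        Finset.sum_le_sum_of_subset_of_nonneg (Finset.filter_subset _ _)
          (fun _ _ _ => Nat.cast_nonneg _)
    _ = ((∑ S ∈ H.image (fun h => h ∩ I.biUnion V), colDeg H S : ℕ) : ℝ) := by
        rw [Nat.cast_sum]
    _ = (H.card : ℝ) := by rw [sum_colDeg hdisj hpart Finset.Subset.rfl I]

end Counting

lemma log_ge_of_three_le {n : ℕ} (hn : 3 ≤ n) : (109/100 : ℝ) ≤ Real.log n := by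
  have hexp9 : Real.exp (9/100) ≤ 100/91 := by
    have h := Real.add_one_le_exp (-(9/100) : ℝ)
    rw [Real.exp_neg] at h
    have hpos : (0:ℝ) < Real.exp (9/100) := Real.exp_pos _
    rw [le_inv_comm₀ (by norm_num) hpos] at h
    linarith [h]
  have hexp : Real.exp (109/100) ≤ 3 := by
    have h1 : Real.exp (109/100) = Real.exp 1 * Real.exp (9/100) := by
      rw [← Real.exp_add]; norm_num
    have h2 : Real.exp 1 < 2.7182818286 := Real.exp_one_lt_d9
    have h3 : (0:ℝ) < Real.exp (9/100) := Real.exp_pos _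
    nlinarith
  rw [Real.le_log_iff_exp_le (by positivity : (0:ℝ) < n)]
  calc Real.exp (109/100) ≤ 3 := hexp
    _ ≤ (n:ℝ) := by exact_mod_cast hn

lemma exp_pow_le (k : ℕ) (c : ℝ) (hc : (2.7182818286:ℝ)^k ≤ c) : Real.exp k ≤ c := by
  calc Real.exp (k:ℝ) = (Real.exp 1)^k := by
        rw [← Real.exp_nat_mul]; norm_num
    _ ≤ (2.7182818286:ℝ)^k := by
        apply pow_le_pow_left₀ (le_of_lt (Real.exp_pos 1))
        exact le_of_lt Real.exp_one_lt_d9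
    _ ≤ c := hc

section Numeric
variable {n : ℕ} (hn : 3 ≤ n)

-- the number of classes per type
noncomputable def mOf (n : ℕ) : ℕ := max 1 ⌊Real.log n / 2⌋₊

lemma mOf_pos (n : ℕ) : 0 < mOf n := lt_of_lt_of_le one_pos (le_max_left _ _)

include hn in
lemma numA : (3/2 : ℝ) * ((mOf n : ℕ) : ℝ)^8 ≤ (Real.log n)^8 := by
  have hx : (109/100 : ℝ) ≤ Real.log n := log_ge_of_three_le hn
  set x := Real.log n with hxdef
  by_cases h2 : ⌊x / 2⌋₊ ≤ 1
  · have hm : mOf n = 1 := by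
      unfold mOf; rw [← hxdef]; omega
    rw [hm]
    have : ((109:ℝ)/100)^8 ≤ x^8 := by
      apply pow_le_pow_left₀ (by norm_num) hx
    nlinarith
  · have hm : mOf n = ⌊x / 2⌋₊ := by
      unfold mOf; rw [← hxdef]; omega
    have hxpos : (0:ℝ) ≤ x / 2 := by linarith
    have hle : ((mOf n : ℕ) : ℝ) ≤ x / 2 := by rw [hm]; exact Nat.floor_le hxpos
    have hnn : (0:ℝ) ≤ ((mOf n : ℕ) : ℝ) := Nat.cast_nonneg _
    have : ((mOf n : ℕ) : ℝ)^8 ≤ (x/2)^8 := pow_le_pow_left₀ hnn hle 8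
    nlinarith [pow_nonneg hxpos 8]

include hn in
lemma numB : 24 * ((mOf n : ℕ) : ℝ)^8 * ((n:ℝ)^3 + 1) ^ ((1:ℝ)/(mOf n : ℕ)) ≤
    (12 * Real.log n)^8 := by
  have hx : (109/100 : ℝ) ≤ Real.log n := log_ge_of_three_le hn
  set x := Real.log n with hxdef
  have hbase : (1:ℝ) ≤ (n:ℝ)^3 + 1 := by
    have : (0:ℝ) ≤ (n:ℝ)^3 := by positivity
    linarith
  by_cases h2 : ⌊x / 2⌋₊ ≤ 1
  · have hm : mOf n = 1 := by unfold mOf; rw [← hxdef]; omega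
    rw [hm]
    push_cast
    rw [div_one, Real.rpow_one]
    -- x < 4 so n < e^4
    have hx4 : x < 4 := by
      have := Nat.floor_lt (by linarith : (0:ℝ) ≤ x / 2) |>.mp (by omega : ⌊x/2⌋₊ < 2)
      linarith
    have hnlt : (n:ℝ) < Real.exp 4 := by
      have : (n:ℝ) = Real.exp x := by
        rw [hxdef, Real.exp_log (by positivity)]
      rw [this]
      exact Real.exp_lt_exp.mpr hx4
    have hexp4 : Real.exp 4 ≤ 54.6 := by
      have := exp_pow_le 4 54.6 (by norm_num)
      simpa using this
    have h54 : (n:ℝ) ≤ 54.6 := le_of_lt (lt_of_lt_of_le hnlt hexp4)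
    have hn3 : (n:ℝ)^3 + 1 ≤ 162773 := by
      have := pow_le_pow_left₀ (Nat.cast_nonneg (α := ℝ) n) h54 3
      norm_num at this ⊢
      linarith
    have hxp : ((12 * (109:ℝ)/100))^8 ≤ (12*x)^8 := by
      apply pow_le_pow_left₀ (by norm_num)
      linarith
    nlinarith
  · have hm : mOf n = ⌊x / 2⌋₊ := by unfold mOf; rw [← hxdef]; omega
    have hx4 : (4:ℝ) ≤ x := by
      have h2' : 2 ≤ ⌊x/2⌋₊ := by omega
      have := (Nat.le_floor_iff (by linarith : (0:ℝ) ≤ x/2)).mp h2'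
      push_cast at this
      linarith
    have hxpos : (0:ℝ) ≤ x / 2 := by linarith
    have hmlR : ((mOf n : ℕ):ℝ) ≤ x / 2 := by rw [hm]; exact Nat.floor_le hxpos
    have hmgR : x / 4 ≤ ((mOf n : ℕ):ℝ) := by
      have h5 : x/2 < (⌊x/2⌋₊ : ℝ) + 1 := Nat.lt_floor_add_one _
      rw [hm]
      linarith
    have hmpos : (0:ℝ) < ((mOf n : ℕ):ℝ) := by exact_mod_cast mOf_pos n
    -- bound the rpow factor
    have hb1 : (n:ℝ)^3 + 1 ≤ (n:ℝ)^4 := by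
      have h3 : (3:ℝ) ≤ (n:ℝ) := by exact_mod_cast hn
      have h0 : (1:ℝ) ≤ (n:ℝ)^3 := one_le_pow₀ (by linarith)
      have h1 : (n:ℝ)^3 * 3 ≤ (n:ℝ)^3 * (n:ℝ) := mul_le_mul_of_nonneg_left h3 (by positivity)
      nlinarith [h0, h1]
    have hrp : ((n:ℝ)^3 + 1) ^ ((1:ℝ)/(mOf n : ℕ)) ≤ ((n:ℝ)^4) ^ ((1:ℝ)/(mOf n : ℕ)) :=
      Real.rpow_le_rpow (by positivity) hb1 (by positivity)
    have hrp2 : ((n:ℝ)^4) ^ ((1:ℝ)/(mOf n : ℕ)) = Real.exp ((1/(mOf n : ℕ):ℝ) * (4*x)) := by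
      rw [Real.rpow_def_of_pos (by positivity), Real.log_pow]
      push_cast
      rw [hxdef]
      ring_nf
    have hexp16 : Real.exp ((1/(mOf n : ℕ):ℝ) * (4*x)) ≤ Real.exp 16 := by
      apply Real.exp_le_exp.mpr
      rw [div_mul_eq_mul_div, one_mul, div_le_iff₀ hmpos]
      linarith
    have he16 : Real.exp 16 ≤ 8886111 := by
      have := exp_pow_le 16 8886111 (by norm_num)
      simpa using this
    have hBf : ((n:ℝ)^3 + 1) ^ ((1:ℝ)/(mOf n : ℕ)) ≤ 8886111 := by
      calc ((n:ℝ)^3 + 1) ^ ((1:ℝ)/(mOf n : ℕ)) ≤ ((n:ℝ)^4) ^ ((1:ℝ)/(mOf n : ℕ)) := hrp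
        _ = Real.exp ((1/(mOf n : ℕ):ℝ) * (4*x)) := hrp2
        _ ≤ Real.exp 16 := hexp16
        _ ≤ 8886111 := he16
    have hm8 : ((mOf n : ℕ):ℝ)^8 ≤ (x/2)^8 := pow_le_pow_left₀ (le_of_lt hmpos) hmlR 8
    have hBnn : (0:ℝ) ≤ ((n:ℝ)^3 + 1) ^ ((1:ℝ)/(mOf n : ℕ)) := by positivity
    have hxp8 : (0:ℝ) ≤ x^8 := by positivity
    calc 24 * ((mOf n : ℕ):ℝ)^8 * ((n:ℝ)^3 + 1) ^ ((1:ℝ)/(mOf n : ℕ))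
        ≤ 24 * (x/2)^8 * 8886111 := by
          apply mul_le_mul
          · exact mul_le_mul_of_nonneg_left hm8 (by norm_num)
          · exact hBf
          · exact hBnn
          · positivity
      _ ≤ (12*x)^8 := by nlinarith [hxp8]
  
end Numeric

end Aux

set_option maxHeartbeats 2000000 in
theorem stmt_7 (n : ℕ) (V : Fin 3 → Finset (Fin n)) (H : Finset (Finset (Fin n)))
    (hdisj : ∀ i j : Fin 3, i ≠ j → Disjoint (V i) (V j))
    (hcover : (Finset.univ : Finset (Fin n)) = Finset.univ.biUnion V)
    (hpart : ∀ h ∈ H, h.card = 3 ∧ ∀ i : Fin 3, (h ∩ V i).card = 1) :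
    ∃ H' : Finset (Finset (Fin n)), H' ⊆ H ∧
      ∃ Δ : Finset (Fin 3) → ℝ,
        (H.card : ℝ) * Real.log n ^ (-8 : ℤ) ≤ (H'.card : ℝ) ∧
        ∀ (I : Finset (Fin 3)) (S : Finset (Fin n)),
          S.card = I.card → S ⊆ I.biUnion V → (∃ h ∈ H', S ⊆ h) →
          Δ I * (12 * Real.log n) ^ (-8 : ℤ) ≤ (colDeg H' S : ℝ) ∧
          (colDeg H' S : ℝ) ≤ Δ I := by
  have hpart2 : ∀ h ∈ H, ∀ i : Fin 3, (h ∩ V i).card = 1 := fun h hh => (hpart h hh).2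
  by_cases hHe : H = ∅
  · subst hHe
    refine ⟨∅, Finset.Subset.rfl, fun _ => 0, by simp, ?_⟩
    rintro I S _ _ ⟨h, hh, -⟩
    simp at hh
  obtain ⟨h₀, hh₀⟩ := Finset.nonempty_iff_ne_empty.mpr hHe
  have hn3 : 3 ≤ n := by
    have hcard := (hpart h₀ hh₀).1
    calc 3 = h₀.card := hcard.symm
      _ ≤ (Finset.univ : Finset (Fin n)).card := Finset.card_le_card (Finset.subset_univ _)
      _ = n := by simp
  have hx : (109/100 : ℝ) ≤ Real.log n := log_ge_of_three_le hn3
  have hxpos : (0:ℝ) < Real.log n := by linarith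
  have hHn3 : (H.card : ℝ) ≤ (n:ℝ)^3 := by
    have hsub : H ⊆ (Finset.univ : Finset (Fin n)).powersetCard 3 := by
      intro h hh
      exact Finset.mem_powersetCard.mpr ⟨Finset.subset_univ _, (hpart h hh).1⟩
    have h1 : H.card ≤ n^3 := by
      calc H.card ≤ ((Finset.univ : Finset (Fin n)).powersetCard 3).card :=
            Finset.card_le_card hsub
        _ = n.choose 3 := by rw [Finset.card_powersetCard, Finset.card_univ, Fintype.card_fin]
        _ ≤ n^3 := Nat.choose_le_pow n 3
    exact_mod_cast h1
  set m : ℕ := mOf n with hmdef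
  have hm0 : 0 < m := mOf_pos n
  have hmR : (0:ℝ) < (m:ℝ) := by exact_mod_cast hm0
  set L : ℝ := Real.log ((n:ℝ)^3 + 1) with hLdef
  have hL : (0:ℝ) < L := by
    apply Real.log_pos
    have : (0:ℝ) < (n:ℝ)^3 := by positivity
    linarith
  set key : Finset (Fin 3) → Finset (Fin n) → Finset (Fin n) :=
    fun I h => h ∩ I.biUnion V with hkeydef
  have hkeysub : ∀ I h, key I h ⊆ h := fun I h => Finset.inter_subset_left
  set cls : ℕ → ℕ := fun d => ⌊(m:ℝ) * Real.log d / L⌋₊ with hclsdef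
  have hclslt : ∀ h ∈ H, ∀ I : Finset (Fin 3), cls (colDeg H (key I h)) < m := by
    intro h hh I
    set d := colDeg H (key I h) with hd
    have hd1 : 1 ≤ d := one_le_colDeg hh (hkeysub I h)
    have hdn : (d:ℝ) < (n:ℝ)^3 + 1 := by
      have : (d:ℝ) ≤ (H.card : ℝ) := by exact_mod_cast colDeg_le_card
      linarith
    have hlogd : Real.log d < L := by
      rw [hLdef]
      apply Real.log_lt_log (by exact_mod_cast hd1) hdn
    have hlognn : (0:ℝ) ≤ Real.log d := Real.log_natCast_nonneg d
    rw [hclsdef]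
    apply Nat.floor_lt (by positivity) |>.mpr
    rw [div_lt_iff₀ hL]
    have := mul_lt_mul_of_pos_left hlogd hmR
    linarith
  set f : Finset (Fin n) → (Finset (Fin 3) → Fin m) :=
    fun h I => ⟨cls (colDeg H (key I h)) % m, Nat.mod_lt _ hm0⟩ with hfdef
  have hfval : ∀ h ∈ H, ∀ I : Finset (Fin 3), ((f h I : ℕ)) = cls (colDeg H (key I h)) := by
    intro h hh I
    simp only [hfdef]
    exact Nat.mod_eq_of_lt (hclslt h hh I)
  -- pigeonhole
  obtain ⟨c₀, hc₀mem, hc₀max⟩ := Finset.exists_max_image (H.image f)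
    (fun c => (H.filter fun h => f h = c).card) (Finset.Nonempty.image ⟨h₀, hh₀⟩ f)
  set G₁ := H.filter fun h => f h = c₀ with hG₁def
  have hG₁sub : G₁ ⊆ H := Finset.filter_subset _ _
  have hHle : (H.card : ℝ) ≤ (m:ℝ)^8 * (G₁.card : ℝ) := by
    have h1 : H.card ≤ (H.image f).card * G₁.card := by
      rw [Finset.card_eq_sum_card_image f H]
      calc ∑ c ∈ H.image f, (H.filter fun h => f h = c).card
          ≤ ∑ _c ∈ H.image f, G₁.card := Finset.sum_le_sum fun c hc => hc₀max c hc
        _ = (H.image f).card * G₁.card := by rw [Finset.sum_const, smul_eq_mul]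
    have h2 : (H.image f).card ≤ m^8 := by
      calc (H.image f).card ≤ Fintype.card (Finset (Fin 3) → Fin m) := Finset.card_le_univ _
        _ = m^8 := by
            rw [Fintype.card_fun, Fintype.card_fin, Fintype.card_finset, Fintype.card_fin]
            norm_num
    calc (H.card : ℝ) ≤ ((H.image f).card : ℝ) * G₁.card := by exact_mod_cast h1
      _ ≤ (m:ℝ)^8 * G₁.card := by
          apply mul_le_mul_of_nonneg_right _ (Nat.cast_nonneg _)
          exact_mod_cast h2
  -- class data
  set D : Finset (Fin 3) → ℝ := fun I => ((n:ℝ)^3 + 1) ^ (((c₀ I : ℕ):ℝ)/(m:ℝ)) with hDdef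
  set Δ : Finset (Fin 3) → ℝ := fun I => ((n:ℝ)^3 + 1) ^ ((((c₀ I : ℕ):ℝ)+1)/(m:ℝ)) with hΔdef
  have hbasepos : (0:ℝ) < (n:ℝ)^3 + 1 := by positivity
  have hDpos : ∀ I, 0 < D I := fun I => Real.rpow_pos_of_pos hbasepos _
  have hΔpos : ∀ I, 0 < Δ I := fun I => Real.rpow_pos_of_pos hbasepos _
  have hclass : ∀ h ∈ G₁, ∀ I : Finset (Fin 3),
      D I ≤ (colDeg H (key I h) : ℝ) ∧ (colDeg H (key I h) : ℝ) < Δ I := by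
    intro h hh I
    have hhH : h ∈ H := hG₁sub hh
    have hfc : f h = c₀ := (Finset.mem_filter.mp hh).2
    have hceq : ((c₀ I : ℕ)) = cls (colDeg H (key I h)) := by
      rw [← hfc]; exact hfval h hhH I
    set d := colDeg H (key I h) with hd
    have hd1 : 1 ≤ d := one_le_colDeg hhH (hkeysub I h)
    have hdpos : (0:ℝ) < (d:ℝ) := by exact_mod_cast hd1
    have hlognn : (0:ℝ) ≤ Real.log d := Real.log_natCast_nonneg d
    have hfloor := (Nat.floor_eq_iff (by positivity : (0:ℝ) ≤ (m:ℝ) * Real.log d / L)).mp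
      hceq.symm
    obtain ⟨hlow, hhigh⟩ := hfloor
    have hlow' : (((c₀ I : ℕ):ℝ)/(m:ℝ)) * L ≤ Real.log d := by
      rw [div_mul_eq_mul_div, div_le_iff₀ hmR]
      rw [le_div_iff₀ hL] at hlow
      linarith
    have hhigh' : Real.log d < ((((c₀ I : ℕ):ℝ)+1)/(m:ℝ)) * L := by
      rw [div_mul_eq_mul_div, lt_div_iff₀ hmR]
      rw [div_lt_iff₀ hL] at hhigh
      linarith
    constructor
    · have : D I = Real.exp ((((c₀ I : ℕ):ℝ)/(m:ℝ)) * L) := by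
        rw [hDdef]
        simp only []
        rw [Real.rpow_def_of_pos hbasepos, mul_comm]
      rw [this, ← Real.exp_log hdpos]
      exact Real.exp_le_exp.mpr hlow'
    · have : Δ I = Real.exp (((((c₀ I : ℕ):ℝ)+1)/(m:ℝ)) * L) := by
        rw [hΔdef]
        simp only []
        rw [Real.rpow_def_of_pos hbasepos, mul_comm]
      rw [this, ← Real.exp_log hdpos]
      exact Real.exp_lt_exp.mpr hhigh'
  -- cleaning
  set t : Finset (Fin 3) → ℝ := fun I => D I / (24 * (m:ℝ)^8) with htdef
  have htpos : ∀ I, 0 < t I := fun I => by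
    rw [htdef]; exact div_pos (hDpos I) (by positivity)
  obtain ⟨G', hG'G₁, hcount, hreg⟩ := clean_exists Finset.univ key hkeysub t
    (fun I => (htpos I).le) G₁.card G₁ le_rfl
  have hG'H : G' ⊆ H := hG'G₁.trans hG₁sub
  -- bounding the deletion
  have hdel : ∀ I : Finset (Fin 3), t I * ((G₁.image (key I)).card : ℝ)
      ≤ (H.card : ℝ) / (24 * (m:ℝ)^8) := by
    intro I
    have hsubA : G₁.image (key I) ⊆ (H.image fun h => h ∩ I.biUnion V).filter
        fun S => D I ≤ (colDeg H S : ℝ) := by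
      intro S hS
      obtain ⟨h, hh, rfl⟩ := Finset.mem_image.mp hS
      refine Finset.mem_filter.mpr ⟨Finset.mem_image_of_mem _ (hG₁sub hh), ?_⟩
      exact (hclass h hh I).1
    have h1 : D I * ((G₁.image (key I)).card : ℝ) ≤ (H.card : ℝ) := by
      calc D I * ((G₁.image (key I)).card : ℝ)
          ≤ D I * ((((H.image fun h => h ∩ I.biUnion V).filter
              fun S => D I ≤ (colDeg H S : ℝ)).card : ℝ)) := by
            apply mul_le_mul_of_nonneg_left _ (hDpos I).le
            exact_mod_cast Finset.card_le_card hsubA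
        _ ≤ (H.card : ℝ) := card_big_keys hdisj hpart2 I (hDpos I)
    rw [htdef]
    rw [div_mul_eq_mul_div, div_le_div_iff_of_pos_right (by positivity)]
    exact h1
  have hdelsum : ((G₁.card : ℝ)) - (G'.card : ℝ) ≤ (G₁.card : ℝ) / 3 := by
    have h8 : (Finset.univ : Finset (Finset (Fin 3))).card = 8 := by
      rw [Finset.card_univ, Fintype.card_finset, Fintype.card_fin]
      norm_num
    calc ((G₁.card : ℝ)) - (G'.card : ℝ)
        ≤ ∑ I ∈ Finset.univ, t I * ((G₁.image (key I)).card : ℝ) := hcount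
      _ ≤ ∑ _I ∈ (Finset.univ : Finset (Finset (Fin 3))), (H.card : ℝ) / (24 * (m:ℝ)^8) :=
          Finset.sum_le_sum fun I _ => hdel I
      _ = 8 * ((H.card : ℝ) / (24 * (m:ℝ)^8)) := by rw [Finset.sum_const, h8]; push_cast; ring
      _ ≤ 8 * (((m:ℝ)^8 * (G₁.card:ℝ)) / (24 * (m:ℝ)^8)) := by
          gcongr
      _ = (G₁.card : ℝ) / 3 := by field_simp; ring
  have hG'big : (2/3 : ℝ) * (G₁.card : ℝ) ≤ (G'.card : ℝ) := by linarith
  -- conclude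
  refine ⟨G', hG'H, Δ, ?_, ?_⟩
  · -- size bound
    have hz : (Real.log n : ℝ) ^ (-8:ℤ) = ((Real.log n)^8)⁻¹ := by
      rw [show (-8:ℤ) = -(8:ℕ) by norm_num, zpow_neg, zpow_natCast]
    rw [hz, mul_inv_le_iff₀ (by positivity)]
    have hA := numA hn3
    nlinarith [Nat.cast_nonneg (α := ℝ) G'.card, Nat.cast_nonneg (α := ℝ) G₁.card,
      pow_nonneg hxpos.le 8, mul_le_mul_of_nonneg_right hA (Nat.cast_nonneg (α := ℝ) G'.card),
      mul_le_mul_of_nonneg_left hG'big (pow_nonneg (Nat.cast_nonneg (α := ℝ) m) 8)]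
  · intro I S hScard hSU hSh
    obtain ⟨h, hhG', hSsub⟩ := hSh
    have hhH : h ∈ H := hG'H hhG'
    have hhG₁ : h ∈ G₁ := hG'G₁ hhG'
    have hSkey : S = key I h := eq_key hdisj (hpart2 h hhH) hScard hSU hSsub
    have hup : (colDeg G' S : ℝ) ≤ Δ I := by
      have h1 : colDeg G' S ≤ colDeg H S := colDeg_mono hG'H S
      have h2 := (hclass h hhG₁ I).2
      rw [← hSkey] at h2
      have : (colDeg G' S : ℝ) ≤ (colDeg H S : ℝ) := by exact_mod_cast h1
      linarith
    refine ⟨?_, hup⟩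
    -- lower bound
    have hSmem : S ∈ G'.image (key I) := by
      rw [hSkey]; exact Finset.mem_image_of_mem _ hhG'
    have hlow := hreg I (Finset.mem_univ I) S hSmem
    have hz : (12 * Real.log n : ℝ) ^ (-8:ℤ) = ((12 * Real.log n)^8)⁻¹ := by
      rw [show (-8:ℤ) = -(8:ℕ) by norm_num, zpow_neg, zpow_natCast]
    rw [hz]
    have hΔsplit : Δ I = D I * ((n:ℝ)^3 + 1) ^ ((1:ℝ)/(m:ℝ)) := by
      rw [hΔdef, hDdef]
      simp only []
      rw [← Real.rpow_add hbasepos]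
      congr 1
      ring
    have hB := numB hn3
    have hpow8 : (0:ℝ) < (12 * Real.log n)^8 := by positivity
    have h1 : ((n:ℝ)^3 + 1) ^ ((1:ℝ)/(m:ℝ)) * ((12 * Real.log n)^8)⁻¹
        ≤ 1 / (24 * (m:ℝ)^8) := by
      rw [mul_inv_le_iff₀ hpow8]
      have h2 : ((n:ℝ)^3 + 1) ^ ((1:ℝ)/(m:ℝ)) ≤ (12 * Real.log n)^8 / (24 * (m:ℝ)^8) :=
        (le_div_iff₀ (by positivity)).mpr (by nlinarith [hB])
      exact h2.trans_eq (by ring)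
    calc Δ I * ((12 * Real.log n)^8)⁻¹
        = D I * (((n:ℝ)^3 + 1) ^ ((1:ℝ)/(m:ℝ)) * ((12 * Real.log n)^8)⁻¹) := by
          rw [hΔsplit]; ring
      _ ≤ D I * (1 / (24 * (m:ℝ)^8)) := mul_le_mul_of_nonneg_left h1 (hDpos I).le
      _ = t I := by rw [htdef]; ring
      _ ≤ (colDeg G' S : ℝ) := hlow
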